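/- arXiv:1610.05898 — 5 statements merged into one kernel-verified Lean document; each statement's English description precedes it below -/
import Mathlib

section
/- Let (M, Ω) be a symplectic manifold, φ: N → M a smooth symplectic immersion, ∇ a symplectic connection on (M, Ω), and ∇̄ the induced symplectic connection on (N, φ^*(Ω)) with second fundamental form Π. For p ∈ N, a 2-dimensional symplectic subspace L ⊂ T_pN spanned by X, Y, and Z ∈ L, the symplectic curvature quadratic forms satisfy scurv^{M,∇}_{φ(p), Tφ(p)(L)}(Tφ(p)(Z)) = scurv^{N,∇̄}_{p,L}(Z) + 2Ω(Π(X, Z), Π(Y, Z)) / φ^*(Ω)(X, Y). -/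
/- Chart model of a symplectic manifold: the manifold is modeled by (a global affine chart of)
a finite-dimensional real normed vector space `E`; a symplectic form is a smooth field of
nondegenerate antisymmetric bilinear forms (closedness is automatic in the presence of a
compatible torsion-free connection), and a symplectic connection is recorded by its
(torsion-free) Christoffel symbols, preserving the symplectic form. -/

structure SympForm (E : Type*) [NormedAddCommGroup E] [NormedSpace ℝ E] where
  ω : E → E →L[ℝ] E →L[ℝ] ℝ
  smooth : ContDiff ℝ (⊤ : ℕ∞) ω
  skew : ∀ x u v, ω x u v = - ω x v u
  nondeg : ∀ x u, (∀ v, ω x u v = 0) → u = 0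

structure SympConnection {E : Type*} [NormedAddCommGroup E] [NormedSpace ℝ E]
    (Ω : SympForm E) where
  Γ : E → E →L[ℝ] E →L[ℝ] E
  smooth : ContDiff ℝ (⊤ : ℕ∞) Γ
  symm : ∀ x u v, Γ x u v = Γ x v u
  parallel : ∀ x u v w, fderiv ℝ Ω.ω x u v w = Ω.ω x (Γ x u v) w + Ω.ω x v (Γ x u w)

variable {E : Type*} [NormedAddCommGroup E] [NormedSpace ℝ E]

/-- Curvature `R(u,v)w = ∇_u∇_v w - ∇_v∇_u w - ∇_{[u,v]}w` of a symplectic connection,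
evaluated on constant vector fields of the chart, as an operator in `w`. -/
noncomputable def curvOp {Ω : SympForm E} (C : SympConnection Ω) (x u v : E) : E →L[ℝ] E :=
  fderiv ℝ C.Γ x u v - fderiv ℝ C.Γ x v u
    + (C.Γ x u).comp (C.Γ x v) - (C.Γ x v).comp (C.Γ x u)

/-- Lowered curvature `R_{ijkl} = R_{ijk}{}^p Ω_{pl}`, i.e. `Ω(R(u,v)w, z)`. -/
noncomputable def Rlow {Ω : SympForm E} (C : SympConnection Ω) (x u v w z : E) : ℝ :=
  Ω.ω x (curvOp C x u v w) z

/-- The symplectic curvature quadratic form `scurv_{x,L}(Z)` of the plane `L` spanned by `X, Y`. -/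
noncomputable def scurv {Ω : SympForm E} (C : SympConnection Ω) (x X Y Z : E) : ℝ :=
  Rlow C x X Y Z Z / Ω.ω x X Y

/-- Ricci tensor `R_{ij} = R_{pij}{}^p`: the trace of `w ↦ R(w,u)v`. -/
noncomputable def ricci {Ω : SympForm E} (C : SympConnection Ω) (x u v : E) : ℝ :=
  LinearMap.trace ℝ E
    ((((fderiv ℝ C.Γ x).flip u).flip v - ((fderiv ℝ C.Γ x) u).flip v
      + (C.Γ x).flip (C.Γ x u v) - (C.Γ x u).comp ((C.Γ x).flip v)).toLinearMap)

/-- Covariant derivative `(∇_w Ric)(u,v)` of the Ricci tensor. -/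
noncomputable def covDerivRic {Ω : SympForm E} (C : SympConnection Ω) (x w u v : E) : ℝ :=
  fderiv ℝ (fun y => ricci C y u v) x w - ricci C x (C.Γ x w u) v - ricci C x u (C.Γ x w v)

/-- Covariant derivative `(∇_a R)(u,v,w,z)` of the (lowered) curvature tensor. -/
noncomputable def covDerivR {Ω : SympForm E} (C : SympConnection Ω) (x a u v w z : E) : ℝ :=
  fderiv ℝ (fun y => Rlow C y u v w z) x a
    - Rlow C x (C.Γ x a u) v w z - Rlow C x u (C.Γ x a v) w z
    - Rlow C x u v (C.Γ x a w) z - Rlow C x u v w (C.Γ x a z)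

/-- `∇` is locally symmetric: `∇R = 0`. -/
def LocallySymmetric {Ω : SympForm E} (C : SympConnection Ω) : Prop :=
  ∀ x a u v w z, covDerivR C x a u v w z = 0

/-- The Ricci tensor is parallel. -/
def ParallelRicci {Ω : SympForm E} (C : SympConnection Ω) : Prop :=
  ∀ x w u v, covDerivRic C x w u v = 0

/-- The symplectic Weyl tensor
`W_{ijkl} = R_{ijkl} − (1/(n+1))(Ω_{i(k}R_{l)j} − Ω_{j(k}R_{l)i} + Ω_{ij}R_{kl})`
on a manifold of dimension `2n`. -/
noncomputable def weyl (n : ℕ) {Ω : SympForm E} (C : SympConnection Ω) (x u v w z : E) : ℝ :=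
  Rlow C x u v w z - (1 / ((n : ℝ) + 1)) *
    ((Ω.ω x u w * ricci C x z v + Ω.ω x u z * ricci C x w v) / 2
      - (Ω.ω x v w * ricci C x z u + Ω.ω x v z * ricci C x w u) / 2
      + Ω.ω x u v * ricci C x w z)

/-- `∇` is Weyl flat (of Ricci type): its symplectic Weyl tensor vanishes. -/
def WeylFlat (n : ℕ) {Ω : SympForm E} (C : SympConnection Ω) : Prop :=
  ∀ x u v w z, weyl n C x u v w z = 0

/-- `∇` is preferred: `∇_{(i}R_{jk)} = 0` (cyclic symmetrization suffices since `Ric` is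
symmetric in its last two arguments). -/
def Preferred {Ω : SympForm E} (C : SympConnection Ω) : Prop :=
  ∀ x u v w, covDerivRic C x u v w + covDerivRic C x v w u + covDerivRic C x w u v = 0

/-- Vanishing of the curvature one-form `ρ_i = ∇^p R_{ip}`: the index is raised with `Ω`, and
the `Ω`-contraction is encoded as the trace of any linear packaging `D` of `∇Ric` against `Ω`
(such a `D` exists and is unique by nondegeneracy of `Ω`). -/
def RhoZero {Ω : SympForm E} (C : SympConnection Ω) : Prop :=
  ∀ x u, ∀ D : E →ₗ[ℝ] E,
    (∀ w v, Ω.ω x (D w) v = covDerivRic C x w u v) → LinearMap.trace ℝ E D = 0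

/-- `A` is a parallel symmetric covariant 2-tensor field. -/
def IsParallelSym2 {Ω : SympForm E} (C : SympConnection Ω)
    (A : E → E →L[ℝ] E →L[ℝ] ℝ) : Prop :=
  (∀ x u v, A x u v = A x v u) ∧ Differentiable ℝ A ∧
    ∀ x u v w, fderiv ℝ A x u v w = A x (C.Γ x u v) w + A x v (C.Γ x u w)

/-- `∇` has constant symplectic sectional curvature: there is a parallel symmetric 2-tensor `A`
such that on every 2-dimensional symplectic subspace (spanned by `X, Y` with `Ω(X,Y) ≠ 0`)
the symplectic curvature quadratic form is the restriction of the quadratic form of `A`. -/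
def HasConstScurv {Ω : SympForm E} (C : SympConnection Ω) : Prop :=
  ∃ A : E → E →L[ℝ] E →L[ℝ] ℝ, IsParallelSym2 C A ∧
    ∀ x X Y, Ω.ω x X Y ≠ 0 →
      ∀ Z ∈ Submodule.span ℝ ({X, Y} : Set E), scurv C x X Y Z = A x Z Z

/-- Lie bracket of vector fields on the chart. -/
noncomputable def lieVF (X Y : E → E) (x : E) : E :=
  fderiv ℝ Y x (X x) - fderiv ℝ X x (Y x)

/-- Covariant derivative `∇_X Y` of vector fields on the chart. -/
noncomputable def covVF {Ω : SympForm E} (C : SympConnection Ω) (X Y : E → E) (x : E) : E :=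
  fderiv ℝ Y x (X x) + C.Γ x (X x) (Y x)

/-- Nijenhuis tensor of an endomorphism field, evaluated on constant vector fields. -/
noncomputable def nijTensor (A : E → E → E) (x u v : E) : E :=
  lieVF (fun y => A y u) (fun y => A y v) x
    - A x (lieVF (fun y => A y u) (fun _ => v) x)
    - A x (lieVF (fun _ => u) (fun y => A y v) x)
    + A x (A x (lieVF (fun _ => u) (fun _ => v) x))

/-- Covariant derivative along a curve `γ` of a field `V` along `γ`. -/
noncomputable def covAlong {Ω : SympForm E} (C : SympConnection Ω) (γ V : ℝ → E) (t : ℝ) : E :=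
  deriv V t + C.Γ (γ t) (deriv γ t) (V t)

/-- `(g,J,Ω)` has constant (para-)holomorphic sectional curvature `4c`:
`R_{ijkl} = 2c(Ω_{i(k}g_{l)j} − Ω_{j(k}g_{l)i} + Ω_{ij}g_{kl})`. -/
def ConstHoloSec {Ω : SympForm E} (C : SympConnection Ω) (g : E → E → E → ℝ) (c : ℝ) : Prop :=
  ∀ x u v w z, Rlow C x u v w z =
    2 * c * ((Ω.ω x u w * g x z v + Ω.ω x u z * g x w v) / 2
      - (Ω.ω x v w * g x z u + Ω.ω x v z * g x w u) / 2
      + Ω.ω x u v * g x w z)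

/-- `C` is the Levi-Civita connection of the metric `g`: `C` is torsion free and `∇g = 0`. -/
def IsLeviCivita {Ω : SympForm E} (C : SympConnection Ω) (g : E → E → E → ℝ) : Prop :=
  ∀ x u v w, fderiv ℝ (fun y => g y v w) x u = g x (C.Γ x u v) w + g x v (C.Γ x u w)

/-! Write `D` for the pull-back of `∇` along `φ`. The Gauss decomposition
`D_u(Tφ Z) = Tφ(∇̄_u Z) + Π(u, Z)`, with `Π` symplectically orthogonal to the image of `Tφ`, gives
`Ω(D_u(Tφ Z), Tφ Z) = φ^*Ω(∇̄_u Z, Z)` at every point. Differentiating this identity in a direction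
`a`, with both connections preserving their symplectic forms, yields
`Ω(D_a D_u(Tφ Z), Tφ Z) = φ^*Ω(∇̄_a ∇̄_u Z, Z) - Ω(Π(u, Z), Π(a, Z))`.
Antisymmetrising in `a, u` turns both second covariant derivatives into curvatures (the third
derivatives of `φ` cancel by symmetry), and the two `Π` terms add up to `2 Ω(Π(a, Z), Π(u, Z))`. -/

section CovAlongMap

variable {F : Type*} [NormedAddCommGroup F] [NormedSpace ℝ F] {Ω : SympForm E}

/-- The pull-back connection `φ^*∇` on fields along `φ`; for `φ = id` it is `∇` itself. -/
noncomputable def covAlongMap (C : SympConnection Ω) (φ : F → E) (V : F → E) (y a : F) : E :=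
  fderiv ℝ V y a + C.Γ (φ y) (fderiv ℝ φ y a) (V y)

theorem fderiv_symplecticForm_along (C : SympConnection Ω) {φ V W : F → E} {x : F}
    (hφ : DifferentiableAt ℝ φ x) (hV : DifferentiableAt ℝ V x) (hW : DifferentiableAt ℝ W x)
    (a : F) :
    fderiv ℝ (fun y => Ω.ω (φ y) (V y) (W y)) x a
      = Ω.ω (φ x) (covAlongMap C φ V x a) (W x) + Ω.ω (φ x) (V x) (covAlongMap C φ W x a) := by
  have hΩ : DifferentiableAt ℝ Ω.ω (φ x) := Ω.smooth.differentiable (by simp) _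
  rw [(((hΩ.hasFDerivAt.comp x hφ.hasFDerivAt).clm_apply hV.hasFDerivAt).clm_apply
    hW.hasFDerivAt).fderiv]
  simp only [ContinuousLinearMap.flip_add, add_apply, ContinuousLinearMap.comp_apply,
    ContinuousLinearMap.flip_apply, C.parallel, covAlongMap, map_add]
  ring

theorem covAlongMap_fderiv_apply (C : SympConnection Ω) {φ : F → E} (hφ : ContDiff ℝ 2 φ)
    (y u w : F) :
    covAlongMap C φ (fun z => fderiv ℝ φ z w) y u
      = fderiv ℝ (fderiv ℝ φ) y u w + C.Γ (φ y) (fderiv ℝ φ y u) (fderiv ℝ φ y w) := by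
  have hT : Differentiable ℝ (fderiv ℝ φ) :=
    (hφ.fderiv_right (m := 1) le_rfl).differentiable one_ne_zero
  simp [covAlongMap, fderiv_clm_apply (hT y) (differentiableAt_const w)]

theorem differentiable_covAlongMap_fderiv (C : SympConnection Ω) {φ : F → E}
    (hφ : ContDiff ℝ 3 φ) (u w : F) :
    Differentiable ℝ (fun y => covAlongMap C φ (fun z => fderiv ℝ φ z w) y u) := by
  simp only [covAlongMap_fderiv_apply C (hφ.of_le (by norm_num))]
  have hT : ContDiff ℝ 2 (fderiv ℝ φ) := hφ.fderiv_right (by norm_num)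
  have hΓ : ContDiff ℝ 1 C.Γ := C.smooth.of_le (by exact_mod_cast le_top)
  have hφ1 : ContDiff ℝ 1 φ := hφ.of_le (by norm_num)
  have hT1 : ContDiff ℝ 1 (fderiv ℝ φ) := hT.of_le (by norm_num)
  have hT2 : ContDiff ℝ 1 (fderiv ℝ (fderiv ℝ φ)) := hT.fderiv_right (by norm_num)
  refine ((hT2.clm_apply contDiff_const).clm_apply contDiff_const).add
    (((hΓ.comp hφ1).clm_apply (hT1.clm_apply contDiff_const)).clm_apply
      (hT1.clm_apply contDiff_const)) |>.differentiable one_ne_zero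

theorem fderiv_covAlongMap_fderiv_apply (C : SympConnection Ω) {φ : F → E}
    (hφ : ContDiff ℝ 3 φ) (x a u w : F) :
    fderiv ℝ (fun y => covAlongMap C φ (fun z => fderiv ℝ φ z w) y u) x a
      = fderiv ℝ (fderiv ℝ (fderiv ℝ φ)) x a u w
        + fderiv ℝ C.Γ (φ x) (fderiv ℝ φ x a) (fderiv ℝ φ x u) (fderiv ℝ φ x w)
        + C.Γ (φ x) (fderiv ℝ (fderiv ℝ φ) x a u) (fderiv ℝ φ x w)
        + C.Γ (φ x) (fderiv ℝ φ x u) (fderiv ℝ (fderiv ℝ φ) x a w) := by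
  simp only [covAlongMap_fderiv_apply C (hφ.of_le (by norm_num))]
  have hT : ContDiff ℝ 2 (fderiv ℝ φ) := hφ.fderiv_right (by norm_num)
  have hφd : HasFDerivAt φ (fderiv ℝ φ x) x :=
    (hφ.differentiable (by norm_num) x).hasFDerivAt
  have hTd : HasFDerivAt (fderiv ℝ φ) (fderiv ℝ (fderiv ℝ φ) x) x :=
    (hT.differentiable (by norm_num) x).hasFDerivAt
  have hT2d : HasFDerivAt (fderiv ℝ (fderiv ℝ φ)) (fderiv ℝ (fderiv ℝ (fderiv ℝ φ)) x) x :=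
    ((hT.fderiv_right (m := 1) (by norm_num)).differentiable one_ne_zero x).hasFDerivAt
  have hΓd : HasFDerivAt C.Γ (fderiv ℝ C.Γ (φ x)) (φ x) :=
    (C.smooth.differentiable (by simp) _).hasFDerivAt
  have hG : HasFDerivAt (fun y => fderiv ℝ (fderiv ℝ φ) y u w
      + C.Γ (φ y) (fderiv ℝ φ y u) (fderiv ℝ φ y w)) _ x :=
    ((hT2d.clm_apply (hasFDerivAt_const u x)).clm_apply (hasFDerivAt_const w x)).add
      (((hΓd.comp x hφd).clm_apply (hTd.clm_apply (hasFDerivAt_const u x))).clm_apply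
        (hTd.clm_apply (hasFDerivAt_const w x)))
  rw [hG.fderiv]
  simp only [ContinuousLinearMap.comp_zero, zero_add, ContinuousLinearMap.flip_add, add_apply,
    ContinuousLinearMap.flip_apply, ContinuousLinearMap.comp_apply]
  abel

theorem covAlongMap_covAlongMap_fderiv_sub (C : SympConnection Ω) {φ : F → E}
    (hφ : ContDiff ℝ 3 φ) (x a u w : F) :
    covAlongMap C φ (fun y => covAlongMap C φ (fun z => fderiv ℝ φ z w) y u) x a
      - covAlongMap C φ (fun y => covAlongMap C φ (fun z => fderiv ℝ φ z w) y a) x u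
      = curvOp C (φ x) (fderiv ℝ φ x a) (fderiv ℝ φ x u) (fderiv ℝ φ x w) := by
  have hsymφ : IsSymmSndFDerivAt ℝ φ x :=
    hφ.contDiffAt.isSymmSndFDerivAt (by simp; norm_num)
  have hsymT : IsSymmSndFDerivAt ℝ (fderiv ℝ φ) x :=
    (hφ.fderiv_right (m := 2) (by norm_num)).contDiffAt.isSymmSndFDerivAt (by simp)
  rw [covAlongMap.eq_1 C φ (fun y => covAlongMap C φ (fun z => fderiv ℝ φ z w) y u),
    covAlongMap.eq_1 C φ (fun y => covAlongMap C φ (fun z => fderiv ℝ φ z w) y a),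
    fderiv_covAlongMap_fderiv_apply C hφ, fderiv_covAlongMap_fderiv_apply C hφ,
    covAlongMap_fderiv_apply C (hφ.of_le (by norm_num)),
    covAlongMap_fderiv_apply C (hφ.of_le (by norm_num)), hsymT.eq u a, hsymφ.eq u a]
  simp only [map_add, curvOp, sub_apply, add_apply, ContinuousLinearMap.comp_apply]
  abel

theorem curvOp_apply_eq_covAlongMap_sub (C : SympConnection Ω) (x a u w : E) :
    curvOp C x a u w
      = covAlongMap C id (fun y => C.Γ y u w) x a - covAlongMap C id (fun y => C.Γ y a w) x u := by
  simpa [covAlongMap] using (covAlongMap_covAlongMap_fderiv_sub C contDiff_id x a u w).symm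

theorem SympForm.ω_add_add_of_orthogonal (Ω : SympForm E) {x s s' : E} {T : F →L[ℝ] E}
    (hs : ∀ w, Ω.ω x s (T w) = 0) (hs' : ∀ w, Ω.ω x s' (T w) = 0) (p q : F) :
    Ω.ω x (T p + s) (T q + s') = Ω.ω x (T p) (T q) + Ω.ω x s s' := by
  simp only [map_add, add_apply, hs, Ω.skew x (T p) s', hs']
  ring

structure IsSecondFundForm {ΩN : SympForm F} (C : SympConnection Ω) (CN : SympConnection ΩN)
    (φ : F → E) (sff : F → F → F → E) : Prop where
  decomp : ∀ x u v,
    covAlongMap C φ (fun y => fderiv ℝ φ y v) x u = fderiv ℝ φ x (CN.Γ x u v) + sff x u v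
  perp : ∀ x u v w, Ω.ω (φ x) (sff x u v) (fderiv ℝ φ x w) = 0

theorem ω_covAlongMap_covAlongMap_fderiv {ΩN : SympForm F} {C : SympConnection Ω}
    {CN : SympConnection ΩN} {φ : F → E} {sff : F → F → F → E} (hφ : ContDiff ℝ 3 φ)
    (hΩN : ∀ x u v, ΩN.ω x u v = Ω.ω (φ x) (fderiv ℝ φ x u) (fderiv ℝ φ x v))
    (hsff : IsSecondFundForm C CN φ sff) (x a u w : F) :
    Ω.ω (φ x) (covAlongMap C φ (fun y => covAlongMap C φ (fun z => fderiv ℝ φ z w) y u) x a)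
        (fderiv ℝ φ x w)
      = ΩN.ω x (covAlongMap CN id (fun y => CN.Γ y u w) x a) w
        - Ω.ω (φ x) (sff x u w) (sff x a w) := by
  have hpull : (fun y => Ω.ω (φ y) (covAlongMap C φ (fun z => fderiv ℝ φ z w) y u)
      (fderiv ℝ φ y w)) = fun y => ΩN.ω y (CN.Γ y u w) w := by
    funext y
    simp [hsff.decomp, hΩN, hsff.perp]
  have hTw : DifferentiableAt ℝ (fun y => fderiv ℝ φ y w) x :=
    ((hφ.fderiv_right (m := 1) (by norm_num)).clm_apply contDiff_const).differentiable
      one_ne_zero x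
  have hΓN : DifferentiableAt ℝ (fun y => CN.Γ y u w) x :=
    (((CN.smooth.of_le (by exact_mod_cast le_top : (1 : WithTop ℕ∞) ≤ _)).clm_apply
      contDiff_const).clm_apply contDiff_const).differentiable one_ne_zero x
  calc _ = fderiv ℝ (fun y => Ω.ω (φ y) (covAlongMap C φ (fun z => fderiv ℝ φ z w) y u)
          (fderiv ℝ φ y w)) x a
        - Ω.ω (φ x) (covAlongMap C φ (fun z => fderiv ℝ φ z w) x u)
          (covAlongMap C φ (fun z => fderiv ℝ φ z w) x a) := by
        rw [fderiv_symplecticForm_along C (hφ.differentiable (by norm_num) x)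
          (differentiable_covAlongMap_fderiv C hφ u w x) hTw]
        ring
    _ = ΩN.ω x (covAlongMap CN id (fun y => CN.Γ y u w) x a) w
          + ΩN.ω x (CN.Γ x u w) (covAlongMap CN id (fun _ => w) x a)
        - Ω.ω (φ x) (covAlongMap C φ (fun z => fderiv ℝ φ z w) x u)
          (covAlongMap C φ (fun z => fderiv ℝ φ z w) x a) := by
        rw [hpull]
        exact congrArg (· - _) (fderiv_symplecticForm_along CN differentiableAt_id hΓN
          (differentiableAt_const w) a)
    _ = _ := by
        rw [hsff.decomp, hsff.decomp,
          SympForm.ω_add_add_of_orthogonal Ω (hsff.perp x u w) (hsff.perp x a w), ← hΩN]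
        simp only [covAlongMap, id_eq, fderiv_id, ContinuousLinearMap.id_apply, map_add,
          add_apply, fderiv_fun_const, Pi.zero_apply, zero_apply, zero_add]
        ring

theorem gauss_equation {ΩN : SympForm F} {C : SympConnection Ω} {CN : SympConnection ΩN}
    {φ : F → E} {sff : F → F → F → E} (hφ : ContDiff ℝ 3 φ)
    (hΩN : ∀ x u v, ΩN.ω x u v = Ω.ω (φ x) (fderiv ℝ φ x u) (fderiv ℝ φ x v))
    (hsff : IsSecondFundForm C CN φ sff) (x X Y Z : F) :
    Rlow C (φ x) (fderiv ℝ φ x X) (fderiv ℝ φ x Y) (fderiv ℝ φ x Z) (fderiv ℝ φ x Z)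
      = Rlow CN x X Y Z Z + 2 * Ω.ω (φ x) (sff x X Z) (sff x Y Z) := by
  rw [Rlow, Rlow, ← covAlongMap_covAlongMap_fderiv_sub C hφ, map_sub, sub_apply,
    ω_covAlongMap_covAlongMap_fderiv hφ hΩN hsff, ω_covAlongMap_covAlongMap_fderiv hφ hΩN hsff,
    curvOp_apply_eq_covAlongMap_sub, map_sub, sub_apply, Ω.skew (φ x) (sff x Y Z)]
  ring

end CovAlongMap

theorem statement_12_general {E F : Type*}
    [NormedAddCommGroup E] [NormedSpace ℝ E]
    [NormedAddCommGroup F] [NormedSpace ℝ F]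
    (Ω : SympForm E) (C : SympConnection Ω)
    (φ : F → E) (hφ : ContDiff ℝ (⊤ : ℕ∞) φ)
    (ΩN : SympForm F)
    (hΩN : ∀ x u v, ΩN.ω x u v = Ω.ω (φ x) (fderiv ℝ φ x u) (fderiv ℝ φ x v))
    (CN : SympConnection ΩN)
    (sff : F → F → F → E)
    (hdecomp : ∀ x u v,
      fderiv ℝ (fun y => fderiv ℝ φ y v) x u
        + C.Γ (φ x) (fderiv ℝ φ x u) (fderiv ℝ φ x v)
      = fderiv ℝ φ x (CN.Γ x u v) + sff x u v)
    (hperp : ∀ x u v w, Ω.ω (φ x) (sff x u v) (fderiv ℝ φ x w) = 0) :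
    ∀ x X Y, ΩN.ω x X Y ≠ 0 → ∀ Z ∈ Submodule.span ℝ ({X, Y} : Set F),
      scurv C (φ x) (fderiv ℝ φ x X) (fderiv ℝ φ x Y) (fderiv ℝ φ x Z)
        = scurv CN x X Y Z
          + 2 * Ω.ω (φ x) (sff x X Z) (sff x Y Z) / ΩN.ω x X Y := by
  intro x X Y _ Z _
  have hsff : IsSecondFundForm C CN φ sff := ⟨hdecomp, hperp⟩
  rw [scurv, scurv, gauss_equation (hφ.of_le (WithTop.coe_le_coe.mpr le_top)) hΩN hsff,
    ← hΩN x X Y, add_div]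

/-- Let `φ : N → M` be a smooth symplectic immersion into `(M, Ω)` with
symplectic connection `C`, and let `CN` be the induced symplectic connection on
`(N, φ^*(Ω))`, with second fundamental form `Π` (characterized by the Gauss decomposition
`∇_u Tφ(v) = Tφ(∇̄_u v) + Π(u,v)` with `Π` taking values in the symplectic orthogonal
complement of `Tφ(TN)`).  Then for `x ∈ N`, a symplectic plane `L` spanned by `X, Y`, and
`Z ∈ L`:
`scurv^{M,∇}(Tφ Z) = scurv^{N,∇̄}(Z) + 2Ω(Π(X,Z), Π(Y,Z))/φ^*(Ω)(X,Y)`. -/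
theorem statement_12 {E F : Type*}
    [NormedAddCommGroup E] [NormedSpace ℝ E] [FiniteDimensional ℝ E]
    [NormedAddCommGroup F] [NormedSpace ℝ F] [FiniteDimensional ℝ F]
    (Ω : SympForm E) (C : SympConnection Ω)
    (φ : F → E) (hφ : ContDiff ℝ (⊤ : ℕ∞) φ)
    (ΩN : SympForm F)
    (hΩN : ∀ x u v, ΩN.ω x u v = Ω.ω (φ x) (fderiv ℝ φ x u) (fderiv ℝ φ x v))
    (CN : SympConnection ΩN)
    (sff : F → F → F → E)
    (hdecomp : ∀ x u v,
      fderiv ℝ (fun y => fderiv ℝ φ y v) x u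
        + C.Γ (φ x) (fderiv ℝ φ x u) (fderiv ℝ φ x v)
      = fderiv ℝ φ x (CN.Γ x u v) + sff x u v)
    (hperp : ∀ x u v w, Ω.ω (φ x) (sff x u v) (fderiv ℝ φ x w) = 0) :
    ∀ x X Y, ΩN.ω x X Y ≠ 0 → ∀ Z ∈ Submodule.span ℝ ({X, Y} : Set F),
      scurv C (φ x) (fderiv ℝ φ x X) (fderiv ℝ φ x Y) (fderiv ℝ φ x Z)
        = scurv CN x X Y Z
          + 2 * Ω.ω (φ x) (sff x X Z) (sff x Y Z) / ΩN.ω x X Y :=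
  statement_12_general Ω C φ hφ ΩN hΩN CN sff hdecomp hperp
end

section
/- Let (M, Ω) be a symplectic manifold and let ∇ be a symplectic connection with nonpositive symplectic sectional curvature. Let γ: I → M be a maximal geodesic of ∇, with I ⊂ ℝ an open interval, and let J(t) be a Jacobi field along γ. Then exactly one of the following holds: (1) the function t ↦ Ω(J(t), γ̇(t)) has at most one zero in I (in particular J vanishes at most once on γ(I)); (2) Ω(J(t), γ̇(t)) is identically zero on I. In particular, if p, q ∈ M are conjugate along γ, then any Jacobi field along γ vanishing at p and q is coisotropic. -/
variable {E : Type*} [NormedAddCommGroup E] [NormedSpace ℝ E]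

/-! Along a geodesic put `F = Ω(J, γ̇)`; then `F' = Ω(∇J, γ̇)` and `F'' = Ω(R(γ̇, J)γ̇, γ̇)`, so
nonpositive symplectic sectional curvature says exactly `F F'' ≥ 0`. Hence `F²` is convex, and two
zeros of `F` force `F = F' = 0` at some point. Nonpositivity also makes `Y ↦ Ω(R(X, Y)X, X)`
proportional to `Y ↦ Ω(X, Y)` (a quadratic polynomial of constant sign has nonpositive
discriminant), which gives `|F''| ≤ K |F|` locally wherever `γ̇ ≠ 0`; Grönwall's inequality then
spreads the vanishing of `(F, F')` over the whole interval. If `γ̇` vanishes somewhere, the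
geodesic equation and Grönwall make `γ̇ ≡ 0`, and `F ≡ 0` trivially. -/

open Set Filter Topology

def NonposScurv {Ω : SympForm E} (C : SympConnection Ω) : Prop :=
  ∀ x X Y, Ω.ω x X Y ≠ 0 → ∀ Z ∈ Submodule.span ℝ ({X, Y} : Set E), scurv C x X Y Z ≤ 0

def IsGeodesicOn {Ω : SympForm E} (C : SympConnection Ω) (γ : ℝ → E) (I : Set ℝ) : Prop :=
  ∀ t ∈ I, deriv (deriv γ) t + C.Γ (γ t) (deriv γ t) (deriv γ t) = 0

def IsJacobiFieldOn {Ω : SympForm E} (C : SympConnection Ω) (γ J : ℝ → E) (I : Set ℝ) : Prop :=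
  ∀ t ∈ I, covAlong C γ (covAlong C γ J) t = curvOp C (γ t) (deriv γ t) (J t) (deriv γ t)

theorem LinearMap.apply_mul_apply_eq_of_forall_mul_nonpos {M : Type*} [AddCommGroup M]
    [Module ℝ M] (f g : M →ₗ[ℝ] ℝ) (h : ∀ Y, g Y * f Y ≤ 0) (Y W : M) :
    f Y * g W = f W * g Y := by
  -- the discriminant of `t ↦ g (Y + t • W) * f (Y + t • W)` is `(f Y * g W - f W * g Y) ^ 2`
  have hdisc := discrim_le_zero (a := -(g W * f W)) (b := -(g Y * f W + g W * f Y))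
    (c := -(g Y * f Y)) fun t => by
      have := h (Y + t • W)
      simp only [map_add, map_smul, smul_eq_mul] at this
      linarith
  rw [discrim] at hdisc
  nlinarith [sq_nonneg (f Y * g W - f W * g Y)]

section Gronwall

variable {F : Type*} [NormedAddCommGroup F] [NormedSpace ℝ F] {f f' : ℝ → F} {K a b : ℝ}

theorem eq_zero_of_norm_deriv_le_mul_norm_of_eq_zero_left
    (hf : ∀ x ∈ Icc a b, HasDerivAt f (f' x) x) (hb : f b = 0)
    (bound : ∀ x ∈ Icc a b, ‖f' x‖ ≤ K * ‖f x‖) : ∀ x ∈ Icc a b, f x = 0 := by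
  have hrefl : ∀ x ∈ Icc (-b) (-a), -x ∈ Icc a b := fun x hx =>
    ⟨by linarith [hx.2], by linarith [hx.1]⟩
  have hneg : ∀ x ∈ Icc (-b) (-a), HasDerivAt (fun y => f (-y)) (-f' (-x)) x := fun x hx => by
    simpa [Function.comp_def] using (hf _ (hrefl x hx)).scomp x (hasDerivAt_neg x)
  have key := eq_zero_of_abs_deriv_le_mul_abs_self_of_eq_zero_right (K := K)
    (fun x hx => (hneg x hx).continuousAt.continuousWithinAt)
    (fun x hx => (hneg x (Ico_subset_Icc_self hx)).hasDerivWithinAt)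
    (by simpa using hb) (fun x hx => by simpa using bound _ (hrefl x (Ico_subset_Icc_self hx)))
  intro x hx
  simpa using key (-x) ⟨by linarith [hx.2], by linarith [hx.1]⟩

theorem eventually_eq_zero_of_norm_deriv_le_mul_norm {t : ℝ}
    (hf : ∀ᶠ x in 𝓝 t, HasDerivAt f (f' x) x) (bound : ∀ᶠ x in 𝓝 t, ‖f' x‖ ≤ K * ‖f x‖)
    (ht : f t = 0) : ∀ᶠ x in 𝓝 t, f x = 0 := by
  obtain ⟨ε, hε, hball⟩ := Metric.eventually_nhds_iff_ball.mp (hf.and bound)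
  have hIcc : Icc (t - ε / 2) (t + ε / 2) ⊆ Metric.ball t ε := by
    intro x hx
    rw [Real.ball_eq_Ioo]
    exact ⟨by linarith [hx.1], by linarith [hx.2]⟩
  filter_upwards [Icc_mem_nhds (by linarith : t - ε / 2 < t) (by linarith : t < t + ε / 2)]
    with x hx
  rcases le_total x t with hxt | htx
  · exact eq_zero_of_norm_deriv_le_mul_norm_of_eq_zero_left
      (fun y hy => (hball y (hIcc ⟨hy.1, hy.2.trans (by linarith)⟩)).1) ht
      (fun y hy => (hball y (hIcc ⟨hy.1, hy.2.trans (by linarith)⟩)).2) x ⟨hx.1, hxt⟩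
  · exact eq_zero_of_abs_deriv_le_mul_abs_self_of_eq_zero_right
      (fun y hy => (hball y (hIcc ⟨by linarith [hy.1], hy.2⟩)).1.continuousAt.continuousWithinAt)
      (fun y hy => (hball y (hIcc ⟨by linarith [hy.1], hy.2.le⟩)).1.hasDerivWithinAt) ht
      (fun y hy => (hball y (hIcc ⟨by linarith [hy.1], hy.2.le⟩)).2) x ⟨htx, hx.2⟩

theorem IsPreconnected.eqOn_zero_of_norm_deriv_le_mul_norm {I : Set ℝ} (hI : IsOpen I)
    (hIc : IsPreconnected I) (hf : ∀ x ∈ I, HasDerivAt f (f' x) x)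
    (bound : ∀ x ∈ I, ∃ K, ∀ᶠ y in 𝓝 x, ‖f' y‖ ≤ K * ‖f y‖) {t : ℝ} (ht : t ∈ I)
    (h0 : f t = 0) : EqOn f 0 I := by
  have hloc : ∀ x ∈ I, f x = 0 → ∀ᶠ y in 𝓝 x, f y = 0 := fun x hx hx0 => by
    obtain ⟨K, hK⟩ := bound x hx
    exact eventually_eq_zero_of_norm_deriv_le_mul_norm
      (eventually_of_mem (hI.mem_nhds hx) hf) hK hx0
  have hsub : I ⊆ {x | ∀ᶠ y in 𝓝 x, f y = 0} := by
    refine hIc.subset_of_closure_inter_subset isOpen_setOfPred_eventually_nhds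
      ⟨t, ht, hloc t ht h0⟩ ?_
    rintro x ⟨hxcl, hx⟩
    refine hloc x hx ?_
    by_contra hne
    obtain ⟨y, hy0, hy⟩ := ((mem_closure_iff_frequently.mp hxcl).and_eventually
      ((hf x hx).continuousAt.eventually_ne hne)).exists
    exact hy hy0.self_of_nhds
  exact fun x hx => (hsub hx).self_of_nhds

end Gronwall

theorem norm_companion_le {x x' x'' K : ℝ} (h : |x''| ≤ K * |x|) :
    ‖(x', x'')‖ ≤ max K 1 * ‖(x, x')‖ := by
  have hmax : 0 ≤ max |x| |x'| := le_max_of_le_left (abs_nonneg _)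
  simp only [Prod.norm_def, Real.norm_eq_abs]
  refine max_le ?_ ?_
  · exact (le_max_right _ _).trans (le_mul_of_one_le_left hmax (le_max_right _ _))
  · exact h.trans (mul_le_mul (le_max_left _ _) (le_max_left _ _) (abs_nonneg _)
      (le_max_of_le_right zero_le_one))

theorem eqOn_zero_of_mul_deriv2_nonneg {F F' F'' : ℝ → ℝ} {s t : ℝ}
    (hF : ∀ u ∈ Icc s t, HasDerivAt F (F' u) u) (hF' : ∀ u ∈ Ioo s t, HasDerivAt F' (F'' u) u)
    (hFF'' : ∀ u ∈ Ioo s t, 0 ≤ F u * F'' u) (hs : F s = 0) (ht : F t = 0) :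
    EqOn F 0 (Icc s t) := by
  -- `(F²)'' = 2 F'² + 2 F F'' ≥ 0`, and a convex function is bounded by its values at the ends
  have hconv : ConvexOn ℝ (Icc s t) (fun u => F u ^ 2) := by
    refine convexOn_of_hasDerivWithinAt2_nonneg (convex_Icc s t)
      (f' := fun u => 2 * F u * F' u) (f'' := fun u => 2 * F' u ^ 2 + 2 * (F u * F'' u))
      (fun u hu => ((hF u hu).continuousAt.pow 2).continuousWithinAt) ?_ ?_ ?_ <;>
      rw [interior_Icc]
    · intro u hu
      exact (((hF u (Ioo_subset_Icc_self hu)).pow 2).congr_deriv (by ring)).hasDerivWithinAt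
    · intro u hu
      exact ((((hF u (Ioo_subset_Icc_self hu)).const_mul 2).mul (hF' u hu)).congr_deriv
        (by ring)).hasDerivWithinAt
    · intro u hu
      nlinarith [sq_nonneg (F' u), hFF'' u hu]
  intro u hu
  have hst := hu.1.trans hu.2
  have := hconv.le_on_segment (left_mem_Icc.2 hst) (right_mem_Icc.2 hst)
    (by rwa [segment_eq_Icc hst])
  simpa [hs, ht] using this

theorem IsPreconnected.exists_eq_zero_and_deriv_eq_zero_of_mul_deriv2_nonneg {I : Set ℝ}
    (hIc : IsPreconnected I) {F F' F'' : ℝ → ℝ} (hF : ∀ u ∈ I, HasDerivAt F (F' u) u)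
    (hF' : ∀ u ∈ I, HasDerivAt F' (F'' u) u) (hFF'' : ∀ u ∈ I, 0 ≤ F u * F'' u) {s t : ℝ}
    (hs : s ∈ I) (ht : t ∈ I) (hst : s ≠ t) (hFs : F s = 0) (hFt : F t = 0) :
    ∃ m ∈ I, F m = 0 ∧ F' m = 0 := by
  wlog hlt : s < t generalizing s t
  · exact this ht hs hst.symm hFt hFs (lt_of_le_of_ne (not_lt.1 hlt) hst.symm)
  have hsub := hIc.Icc_subset hs ht
  have hzero := eqOn_zero_of_mul_deriv2_nonneg (fun u hu => hF u (hsub hu))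
    (fun u hu => hF' u (hsub (Ioo_subset_Icc_self hu)))
    (fun u hu => hFF'' u (hsub (Ioo_subset_Icc_self hu))) hFs hFt
  obtain ⟨m, hm⟩ : (Ioo s t).Nonempty := nonempty_Ioo.2 hlt
  have hmI := hsub (Ioo_subset_Icc_self hm)
  have hlocal : F =ᶠ[𝓝 m] fun _ => 0 :=
    eventually_of_mem (Ioo_mem_nhds hm.1 hm.2) fun v hv => hzero (Ioo_subset_Icc_self hv)
  refine ⟨m, hmI, hzero (Ioo_subset_Icc_self hm), ?_⟩
  rw [← (hF m hmI).deriv, hlocal.deriv_eq, deriv_const]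

section Curvature

variable {Ω : SympForm E}

theorem Continuous.Rlow (C : SympConnection Ω) {α : Type*} [TopologicalSpace α] {x u v w z : α → E}
    (hx : Continuous x) (hu : Continuous u) (hv : Continuous v) (hw : Continuous w)
    (hz : Continuous z) : Continuous fun a => Rlow C (x a) (u a) (v a) (w a) (z a) := by
  have hΓ' : Continuous (_root_.fderiv ℝ C.Γ) := C.smooth.continuous_fderiv (by simp)
  have hΓ := C.smooth.continuous
  have hΩ := Ω.smooth.continuous
  simp only [_root_.Rlow, curvOp]
  fun_prop

theorem NonposScurv.omega_mul_Rlow_nonpos {C : SympConnection Ω} (hC : NonposScurv C)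
    (x X Y : E) : Ω.ω x X Y * Rlow C x X Y X X ≤ 0 := by
  rcases eq_or_ne (Ω.ω x X Y) 0 with h | h
  · simp [h]
  · have hsc : Rlow C x X Y X X / Ω.ω x X Y ≤ 0 :=
      hC x X Y h X (Submodule.subset_span (mem_insert _ _))
    calc Ω.ω x X Y * Rlow C x X Y X X = Rlow C x X Y X X / Ω.ω x X Y * Ω.ω x X Y ^ 2 := by
          field_simp
      _ ≤ 0 := mul_nonpos_of_nonpos_of_nonneg hsc (sq_nonneg _)

theorem NonposScurv.Rlow_mul_omega_comm {C : SympConnection Ω} (hC : NonposScurv C)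
    (x X Y W : E) : Rlow C x X Y X X * Ω.ω x X W = Rlow C x X W X X * Ω.ω x X Y := by
  let f : E →ₗ[ℝ] ℝ :=
    { toFun := fun Y => Rlow C x X Y X X
      map_add' := fun Y W => by simp [Rlow, curvOp]; ring
      map_smul' := fun c Y => by simp [Rlow, curvOp]; ring }
  exact f.apply_mul_apply_eq_of_forall_mul_nonpos (Ω.ω x X : E →ₗ[ℝ] ℝ)
    (hC.omega_mul_Rlow_nonpos x X) Y W

theorem NonposScurv.exists_eventually_abs_Rlow_le {C : SympConnection Ω} (hC : NonposScurv C)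
    {x₀ X₀ : E} (hX₀ : X₀ ≠ 0) :
    ∃ K, ∀ᶠ p : E × E in 𝓝 (x₀, X₀), ∀ Y, |Rlow C p.1 p.2 Y p.2 p.2| ≤ K * |Ω.ω p.1 p.2 Y| := by
  obtain ⟨W, hW⟩ : ∃ W, Ω.ω x₀ X₀ W ≠ 0 := by
    by_contra! h
    exact hX₀ (Ω.nondeg _ _ h)
  have hΩ := Ω.smooth.continuous
  have hD : Continuous fun p : E × E => Ω.ω p.1 p.2 W := by fun_prop
  have hN : Continuous fun p : E × E => Rlow C p.1 p.2 W p.2 p.2 :=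
    continuous_fst.Rlow C continuous_snd continuous_const continuous_snd continuous_snd
  set q := fun p : E × E => Rlow C p.1 p.2 W p.2 p.2 / Ω.ω p.1 p.2 W
  have hq : ContinuousAt (fun p => |q p|) (x₀, X₀) :=
    continuous_abs.continuousAt.comp (hN.continuousAt.div hD.continuousAt hW)
  refine ⟨|q (x₀, X₀)| + 1, ?_⟩
  filter_upwards [hD.continuousAt.eventually_ne hW, hq.eventually (gt_mem_nhds (lt_add_one _))]
    with p hpW hpq Y
  have hY : Rlow C p.1 p.2 Y p.2 p.2 = q p * Ω.ω p.1 p.2 Y := by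
    have := hC.Rlow_mul_omega_comm p.1 p.2 Y W
    simp only [q]
    field_simp
    linarith
  rw [hY, abs_mul]
  exact mul_le_mul_of_nonneg_right hpq.le (abs_nonneg _)

end Curvature

section Geodesic

variable {Ω : SympForm E} (C : SympConnection Ω)

theorem hasDerivAt_omega_velocity {γ V : ℝ → E} {t : ℝ} (hγ : DifferentiableAt ℝ γ t)
    (hγ' : DifferentiableAt ℝ (deriv γ) t) (hV : DifferentiableAt ℝ V t)
    (hgeo : deriv (deriv γ) t + C.Γ (γ t) (deriv γ t) (deriv γ t) = 0) :
    HasDerivAt (fun u => Ω.ω (γ u) (V u) (deriv γ u))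
      (Ω.ω (γ t) (covAlong C γ V t) (deriv γ t)) t := by
  have hΩ : HasDerivAt (fun u => Ω.ω (γ u)) (fderiv ℝ Ω.ω (γ t) (deriv γ t)) t :=
    (Ω.smooth.differentiable (by simp) (γ t)).hasFDerivAt.comp_hasDerivAt t hγ.hasDerivAt
  refine ((hΩ.clm_apply hV.hasDerivAt).clm_apply hγ'.hasDerivAt).congr_deriv ?_
  rw [add_apply, C.parallel, eq_neg_of_add_eq_zero_left hgeo, covAlong, map_add, add_apply,
    map_neg]
  ring

theorem ContDiffOn.differentiableOn_covAlong {γ V : ℝ → E} {I : Set ℝ} (hI : IsOpen I)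
    (hγ : ContDiffOn ℝ 2 γ I) (hV : ContDiffOn ℝ 2 V I) :
    DifferentiableOn ℝ (covAlong C γ V) I := by
  have hΓ : ContDiffOn ℝ 1 (fun t => C.Γ (γ t)) I :=
    (C.smooth.of_le (WithTop.coe_le_coe.2 le_top)).comp_contDiffOn (hγ.of_le one_le_two)
  exact ((hV.deriv_of_isOpen hI (by norm_num)).add
    ((hΓ.clm_apply (hγ.deriv_of_isOpen hI (by norm_num))).clm_apply
      (hV.of_le one_le_two))).differentiableOn one_ne_zero

variable {C} {γ : ℝ → E} {I : Set ℝ}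

theorem IsGeodesicOn.deriv_eq_zero_or_ne_zero (hgeo : IsGeodesicOn C γ I) (hI : IsOpen I)
    (hIc : IsPreconnected I) (hγ : ContDiffOn ℝ 2 γ I) :
    (∀ t ∈ I, deriv γ t = 0) ∨ ∀ t ∈ I, deriv γ t ≠ 0 := by
  rw [or_iff_not_imp_right]
  push Not
  rintro ⟨t₀, ht₀, h0⟩
  have hγ' : ContDiffOn ℝ 1 (deriv γ) I := hγ.deriv_of_isOpen hI (by norm_num)
  refine fun t ht => hIc.eqOn_zero_of_norm_deriv_le_mul_norm hI
    (fun t ht => ((hγ'.differentiableOn one_ne_zero).differentiableAt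
      (hI.mem_nhds ht)).hasDerivAt) (fun t ht => ?_) ht₀ h0 ht
  have hΓ : Continuous fun x => ‖C.Γ x‖ := C.smooth.continuous.norm (E := E →L[ℝ] E →L[ℝ] E)
  have hcont : ContinuousAt (fun u => ‖C.Γ (γ u)‖ * ‖deriv γ u‖) t :=
    (hΓ.continuousAt.comp (hγ.continuousOn.continuousAt (hI.mem_nhds ht))).mul
      (hγ'.continuousOn.continuousAt (hI.mem_nhds ht)).norm
  refine ⟨‖C.Γ (γ t)‖ * ‖deriv γ t‖ + 1, ?_⟩
  filter_upwards [hI.mem_nhds ht, hcont.eventually (gt_mem_nhds (lt_add_one _))] with u hu hK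
  rw [eq_neg_of_add_eq_zero_left (hgeo u hu), norm_neg]
  calc ‖C.Γ (γ u) (deriv γ u) (deriv γ u)‖ ≤ ‖C.Γ (γ u)‖ * ‖deriv γ u‖ * ‖deriv γ u‖ :=
        (C.Γ (γ u)).le_opNorm₂ _ _
    _ ≤ _ := mul_le_mul_of_nonneg_right hK.le (norm_nonneg _)

theorem NonposScurv.omega_jacobi_eqOn_zero (hC : NonposScurv C) (hI : IsOpen I)
    (hIc : IsPreconnected I) (hγ : ContDiffOn ℝ 2 γ I) (hgeo : IsGeodesicOn C γ I)
    {J : ℝ → E} (hJ : ContDiffOn ℝ 2 J I) (hJac : IsJacobiFieldOn C γ J I) {s t : ℝ}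
    (hs : s ∈ I) (ht : t ∈ I) (hst : s ≠ t) (hJs : Ω.ω (γ s) (J s) (deriv γ s) = 0)
    (hJt : Ω.ω (γ t) (J t) (deriv γ t) = 0) :
    ∀ u ∈ I, Ω.ω (γ u) (J u) (deriv γ u) = 0 := by
  have hγ' : ContDiffOn ℝ 1 (deriv γ) I := hγ.deriv_of_isOpen hI (by norm_num)
  set F := fun u => Ω.ω (γ u) (J u) (deriv γ u)
  set F' := fun u => Ω.ω (γ u) (covAlong C γ J u) (deriv γ u)
  set H := fun u => Rlow C (γ u) (deriv γ u) (J u) (deriv γ u) (deriv γ u)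
  have hderiv : ∀ {V : ℝ → E}, DifferentiableOn ℝ V I → ∀ u ∈ I,
      HasDerivAt (fun u => Ω.ω (γ u) (V u) (deriv γ u))
        (Ω.ω (γ u) (covAlong C γ V u) (deriv γ u)) u := fun hV u hu =>
    hasDerivAt_omega_velocity C
      ((hγ.differentiableOn two_ne_zero).differentiableAt (hI.mem_nhds hu))
      ((hγ'.differentiableOn one_ne_zero).differentiableAt (hI.mem_nhds hu))
      (hV.differentiableAt (hI.mem_nhds hu)) (hgeo u hu)
  have hF : ∀ u ∈ I, HasDerivAt F (F' u) u := hderiv (hJ.differentiableOn two_ne_zero)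
  have hF' : ∀ u ∈ I, HasDerivAt F' (H u) u := fun u hu => by
    have := hderiv (ContDiffOn.differentiableOn_covAlong C hI hγ hJ) u hu
    rw [hJac u hu] at this
    exact this
  rcases hgeo.deriv_eq_zero_or_ne_zero hI hIc hγ with hrest | hmoving
  · intro u hu
    simp [hrest u hu]
  have hskew : ∀ u, Ω.ω (γ u) (deriv γ u) (J u) = -F u := fun u => Ω.skew _ _ _
  have hFH : ∀ u ∈ I, 0 ≤ F u * H u := fun u _ => by
    have := hC.omega_mul_Rlow_nonpos (γ u) (deriv γ u) (J u)
    rw [hskew] at this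
    linarith
  obtain ⟨m, hm, hFm, hF'm⟩ :=
    hIc.exists_eq_zero_and_deriv_eq_zero_of_mul_deriv2_nonneg hF hF' hFH hs ht hst hJs hJt
  have hbound : ∀ u ∈ I, ∃ K, ∀ᶠ v in 𝓝 u, ‖(F' v, H v)‖ ≤ K * ‖(F v, F' v)‖ := by
    intro u hu
    obtain ⟨K, hK⟩ := hC.exists_eventually_abs_Rlow_le (hmoving u hu)
    have hcurve : Tendsto (fun v => (γ v, deriv γ v)) (𝓝 u) (𝓝 (γ u, deriv γ u)) :=
      ((hγ.continuousOn.continuousAt (hI.mem_nhds hu)).prodMk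
        (hγ'.continuousOn.continuousAt (hI.mem_nhds hu))).tendsto
    refine ⟨max K 1, (hcurve.eventually hK).mono fun v hv => norm_companion_le ?_⟩
    simpa only [hskew, abs_neg] using hv (J v)
  intro u hu
  exact congrArg Prod.fst (hIc.eqOn_zero_of_norm_deriv_le_mul_norm hI
    (fun u hu => (hF u hu).prodMk (hF' u hu)) hbound hm (Prod.ext hFm hF'm) hu)

end Geodesic

theorem statement_15_general {E : Type*} [NormedAddCommGroup E] [NormedSpace ℝ E]
    (Ω : SympForm E) (C : SympConnection Ω)
    (hnonpos : ∀ x X Y, Ω.ω x X Y ≠ 0 →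
      ∀ Z ∈ Submodule.span ℝ ({X, Y} : Set E), scurv C x X Y Z ≤ 0)
    (I : Set ℝ) (hIopen : IsOpen I) (hIconn : I.OrdConnected) (hIne : I.Nonempty)
    (γ : ℝ → E) (hγ : ContDiffOn ℝ (⊤ : ℕ∞) γ I)
    (hgeo : ∀ t ∈ I, deriv (deriv γ) t + C.Γ (γ t) (deriv γ t) (deriv γ t) = 0)
    (Jf : ℝ → E) (hJf : ContDiffOn ℝ (⊤ : ℕ∞) Jf I)
    (hJacobi : ∀ t ∈ I,
      covAlong C γ (covAlong C γ Jf) t = curvOp C (γ t) (deriv γ t) (Jf t) (deriv γ t)) :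
    Xor'
      (∀ s ∈ I, ∀ t ∈ I,
        Ω.ω (γ s) (Jf s) (deriv γ s) = 0 → Ω.ω (γ t) (Jf t) (deriv γ t) = 0 → s = t)
      (∀ t ∈ I, Ω.ω (γ t) (Jf t) (deriv γ t) = 0)
    ∧ (∀ K : ℝ → E, ContDiffOn ℝ (⊤ : ℕ∞) K I →
        (∀ t ∈ I,
          covAlong C γ (covAlong C γ K) t = curvOp C (γ t) (deriv γ t) (K t) (deriv γ t)) →
        ∀ s ∈ I, ∀ t ∈ I, s ≠ t → K s = 0 → K t = 0 →
          ∀ u ∈ I, Ω.ω (γ u) (K u) (deriv γ u) = 0) := by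
  have hIc : IsPreconnected I := hIconn.isPreconnected
  have h2 : (2 : WithTop ℕ∞) ≤ ((⊤ : ℕ∞) : WithTop ℕ∞) := WithTop.coe_le_coe.2 le_top
  have key : ∀ K, ContDiffOn ℝ (⊤ : ℕ∞) K I → IsJacobiFieldOn C γ K I → ∀ s ∈ I, ∀ t ∈ I,
      s ≠ t → Ω.ω (γ s) (K s) (deriv γ s) = 0 → Ω.ω (γ t) (K t) (deriv γ t) = 0 →
      ∀ u ∈ I, Ω.ω (γ u) (K u) (deriv γ u) = 0 := fun K hK hKJ s hs t ht =>
    NonposScurv.omega_jacobi_eqOn_zero hnonpos hIopen hIc (hγ.of_le h2) hgeo (hK.of_le h2) hKJ hs ht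
  refine ⟨?_, fun K hK hKJ s hs t ht hst hKs hKt =>
    key K hK hKJ s hs t ht hst (by simp [hKs]) (by simp [hKt])⟩
  by_cases htwice : ∃ s ∈ I, ∃ t ∈ I, s ≠ t ∧ Ω.ω (γ s) (Jf s) (deriv γ s) = 0 ∧
      Ω.ω (γ t) (Jf t) (deriv γ t) = 0
  · obtain ⟨s, hs, t, ht, hst, hJs, hJt⟩ := htwice
    exact Or.inr ⟨key Jf hJf hJacobi s hs t ht hst hJs hJt,
      fun honce => hst (honce s hs t ht hJs hJt)⟩
  · push Not at htwice
    refine Or.inl ⟨fun s hs t ht hJs hJt => by_contra fun hst => htwice s hs t ht hst hJs hJt,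
      fun hall => ?_⟩
    obtain ⟨a, b, hab, hsub⟩ := hIopen.exists_Ioo_subset hIne
    obtain ⟨s, has, hsb⟩ := exists_between hab
    obtain ⟨t, hst, htb⟩ := exists_between hsb
    have hsI : s ∈ I := hsub ⟨has, hsb⟩
    have htI : t ∈ I := hsub ⟨has.trans hst, htb⟩
    exact htwice s hsI t htI hst.ne (hall s hsI) (hall t htI)

/-- Let `C` be a symplectic connection with nonpositive symplectic sectional
curvature, `γ : I → M` a (maximal) geodesic on an open interval `I`, and `Jf` a Jacobi field
along `γ`.  Then exactly one of the following holds: (1) `t ↦ Ω(Jf(t), γ̇(t))` has at most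
one zero in `I` (so in particular `Jf` vanishes at most once); or (2) `Ω(Jf(t), γ̇(t)) ≡ 0`
on `I`.  In particular any Jacobi field along `γ` vanishing at two distinct points (conjugate
points) is coisotropic. -/
theorem statement_15 {E : Type*} [NormedAddCommGroup E] [NormedSpace ℝ E]
    [FiniteDimensional ℝ E]
    (Ω : SympForm E) (C : SympConnection Ω)
    (hnonpos : ∀ x X Y, Ω.ω x X Y ≠ 0 →
      ∀ Z ∈ Submodule.span ℝ ({X, Y} : Set E), scurv C x X Y Z ≤ 0)
    (I : Set ℝ) (hIopen : IsOpen I) (hIconn : I.OrdConnected) (hIne : I.Nonempty)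
    (γ : ℝ → E) (hγ : ContDiffOn ℝ (⊤ : ℕ∞) γ I)
    (hgeo : ∀ t ∈ I, deriv (deriv γ) t + C.Γ (γ t) (deriv γ t) (deriv γ t) = 0)
    (Jf : ℝ → E) (hJf : ContDiffOn ℝ (⊤ : ℕ∞) Jf I)
    (hJacobi : ∀ t ∈ I,
      covAlong C γ (covAlong C γ Jf) t = curvOp C (γ t) (deriv γ t) (Jf t) (deriv γ t)) :
    Xor'
      (∀ s ∈ I, ∀ t ∈ I,
        Ω.ω (γ s) (Jf s) (deriv γ s) = 0 → Ω.ω (γ t) (Jf t) (deriv γ t) = 0 → s = t)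
      (∀ t ∈ I, Ω.ω (γ t) (Jf t) (deriv γ t) = 0)
    ∧ (∀ K : ℝ → E, ContDiffOn ℝ (⊤ : ℕ∞) K I →
        (∀ t ∈ I,
          covAlong C γ (covAlong C γ K) t = curvOp C (γ t) (deriv γ t) (K t) (deriv γ t)) →
        ∀ s ∈ I, ∀ t ∈ I, s ≠ t → K s = 0 → K t = 0 →
          ∀ u ∈ I, Ω.ω (γ u) (K u) (deriv γ u) = 0) :=
  statement_15_general Ω C hnonpos I hIopen hIconn hIne γ hγ hgeo Jf hJf hJacobi
end

section
/- Let ∇ be a symplectic connection on a symplectic manifold (M, Ω) and Z a vector field on M. For any p ∈ M and any 2-dimensional symplectic subspace L ⊂ T_pM containing Z_p, if X and Y are vector fields spanning L then scurv_{p,L}(Z)·Ω(X, Y) = d((∇_Z Z)^♭ − L_Z(Z^♭))(X, Y) + 2Ω(∇_X Z, ∇_Y Z), where T^♭ = Ω(T, ·) for a vector field T and L_Z denotes the Lie derivative. -/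
variable {E : Type*} [NormedAddCommGroup E] [NormedSpace ℝ E]

/-- The one-form `β = (∇_Z Z)^♭ − L_Z(Z^♭)`, where `T^♭ = Ω(T, ·)` and `L_Z` is the Lie
derivative, evaluated on a constant vector `w` (using `[Z, w] = -DZ(w)` for the constant
extension of `w`). -/
noncomputable def oneFormSec {E : Type*} [NormedAddCommGroup E] [NormedSpace ℝ E]
    {Ω : SympForm E} (C : SympConnection Ω) (Z : E → E) (y w : E) : ℝ :=
  Ω.ω y (covVF C Z Z y) w
    - (fderiv ℝ (fun y' => Ω.ω y' (Z y') w) y (Z y) + Ω.ω y (Z y) (fderiv ℝ Z y w))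

/- Since `∇Ω = 0` and `∇` is torsion free, the one-form `β = (∇_Z Z)^♭ − L_Z(Z^♭)` is simply
`β(w) = −Ω(Z, ∇_w Z)`. Differentiating once more with `∇Ω = 0`, along constant (hence
commuting) fields, gives `dβ(X,Y) = −2Ω(∇_X Z, ∇_Y Z) − Ω(Z, R(X,Y)Z)`, and skew-symmetry of
`Ω` turns the last term into `Ω(R(X,Y)Z, Z) = scurv(Z)·Ω(X,Y)`. -/

theorem fderiv_clm_apply_apply {𝕜 F G H K : Type*} [NontriviallyNormedField 𝕜]
    [NormedAddCommGroup F] [NormedSpace 𝕜 F] [NormedAddCommGroup G] [NormedSpace 𝕜 G]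
    [NormedAddCommGroup H] [NormedSpace 𝕜 H] [NormedAddCommGroup K] [NormedSpace 𝕜 K]
    {f : F → G →L[𝕜] H →L[𝕜] K} {a : F → G} {b : F → H} {x : F}
    (hf : DifferentiableAt 𝕜 f x) (ha : DifferentiableAt 𝕜 a x) (hb : DifferentiableAt 𝕜 b x)
    (v : F) :
    fderiv 𝕜 (fun y => f y (a y) (b y)) x v
      = fderiv 𝕜 f x v (a x) (b x) + f x (fderiv 𝕜 a x v) (b x) + f x (a x) (fderiv 𝕜 b x v) := by
  rw [fderiv_clm_apply (hf.clm_apply ha) hb, fderiv_clm_apply hf ha]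
  simp only [add_apply, ContinuousLinearMap.comp_apply, ContinuousLinearMap.flip_apply]
  abel

theorem ContDiffAt.differentiableAt_fderiv {Z : E → E} {x : E} (hZ : ContDiffAt ℝ 2 Z x) :
    DifferentiableAt ℝ (fderiv ℝ Z) x :=
  (hZ.fderiv_right (m := 1) le_rfl).differentiableAt one_ne_zero

theorem SympForm.differentiable (Ω : SympForm E) : Differentiable ℝ Ω.ω :=
  Ω.smooth.differentiable (by simp)

theorem SympConnection.differentiable {Ω : SympForm E} (C : SympConnection Ω) :
    Differentiable ℝ C.Γ :=
  C.smooth.differentiable (by simp)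

namespace SympConnection

variable {Ω : SympForm E} (C : SympConnection Ω)

theorem covVF_const_left (v : E) (A : E → E) (x : E) :
    covVF C (fun _ => v) A x = fderiv ℝ A x v + C.Γ x v (A x) :=
  rfl

theorem fderiv_sympForm_apply {A B : E → E} {x : E} (hA : DifferentiableAt ℝ A x)
    (hB : DifferentiableAt ℝ B x) (v : E) :
    fderiv ℝ (fun y => Ω.ω y (A y) (B y)) x v
      = Ω.ω x (covVF C (fun _ => v) A x) (B x) + Ω.ω x (A x) (covVF C (fun _ => v) B x) := by
  rw [fderiv_clm_apply_apply (Ω.differentiable x) hA hB, C.parallel, covVF_const_left,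
    covVF_const_left]
  simp only [map_add, add_apply]
  ring

theorem oneFormSec_eq_neg_sympForm_covVF {Z : E → E} {y : E} (hZ : DifferentiableAt ℝ Z y)
    (w : E) :
    oneFormSec C Z y w = -Ω.ω y (Z y) (covVF C (fun _ => w) Z y) := by
  rw [oneFormSec, C.fderiv_sympForm_apply hZ (differentiableAt_const w)]
  simp only [covVF, fderiv_fun_const, Pi.zero_apply, zero_apply, zero_add,
    map_add, C.symm y (Z y) w]
  ring

variable {Z : E → E} {x : E}

theorem differentiableAt_covVF_const (hZ : ContDiffAt ℝ 2 Z x) (w : E) :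
    DifferentiableAt ℝ (covVF C (fun _ => w) Z) x :=
  (hZ.differentiableAt_fderiv.clm_apply (differentiableAt_const w)).add
    (((C.differentiable x).clm_apply (differentiableAt_const w)).clm_apply
      (hZ.differentiableAt two_ne_zero))

theorem fderiv_covVF_const (hZ : ContDiffAt ℝ 2 Z x) (v w : E) :
    fderiv ℝ (covVF C (fun _ => w) Z) x v
      = fderiv ℝ (fderiv ℝ Z) x v w + fderiv ℝ C.Γ x v w (Z x) + C.Γ x w (fderiv ℝ Z x v) := by
  have hDZw : DifferentiableAt ℝ (fun y => fderiv ℝ Z y w) x :=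
    hZ.differentiableAt_fderiv.clm_apply (differentiableAt_const w)
  have hΓwZ : DifferentiableAt ℝ (fun y => C.Γ y w (Z y)) x :=
    ((C.differentiable x).clm_apply (differentiableAt_const w)).clm_apply
      (hZ.differentiableAt two_ne_zero)
  change fderiv ℝ (fun y => fderiv ℝ Z y w + C.Γ y w (Z y)) x v = _
  rw [fderiv_fun_add hDZw hΓwZ, add_apply, fderiv_clm_apply hZ.differentiableAt_fderiv
      (differentiableAt_const w),
    fderiv_clm_apply_apply (C.differentiable x) (differentiableAt_const w)
      (hZ.differentiableAt two_ne_zero) v]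
  simp only [fderiv_fun_const, Pi.zero_apply, add_apply, ContinuousLinearMap.comp_apply,
    ContinuousLinearMap.flip_apply, zero_apply, map_zero, zero_add, add_zero]
  abel

theorem covVF_const_sub_covVF_const (hZ : ContDiffAt ℝ 2 Z x) (u v : E) :
    covVF C (fun _ => u) (covVF C (fun _ => v) Z) x
      - covVF C (fun _ => v) (covVF C (fun _ => u) Z) x = curvOp C x u v (Z x) := by
  simp only [covVF_const_left, C.fderiv_covVF_const hZ, (hZ.isSymmSndFDerivAt (by simp)).eq u v,
    curvOp, map_add, add_apply, sub_apply, ContinuousLinearMap.comp_apply]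
  abel

theorem fderiv_oneFormSec (hZ : ContDiff ℝ 2 Z) (v w : E) :
    fderiv ℝ (fun y => oneFormSec C Z y w) x v
      = -(Ω.ω x (covVF C (fun _ => v) Z x) (covVF C (fun _ => w) Z x)
          + Ω.ω x (Z x) (covVF C (fun _ => v) (covVF C (fun _ => w) Z) x)) := by
  have hZd : Differentiable ℝ Z := hZ.differentiable two_ne_zero
  simp only [C.oneFormSec_eq_neg_sympForm_covVF (hZd _), fderiv_fun_neg, neg_apply,
    C.fderiv_sympForm_apply (hZd x) (C.differentiableAt_covVF_const hZ.contDiffAt w)]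

theorem fderiv_oneFormSec_sub_fderiv_oneFormSec (hZ : ContDiff ℝ 2 Z) (u v : E) :
    fderiv ℝ (fun y => oneFormSec C Z y v) x u - fderiv ℝ (fun y => oneFormSec C Z y u) x v
      = Rlow C x u v (Z x) (Z x)
          - 2 * Ω.ω x (covVF C (fun _ => u) Z x) (covVF C (fun _ => v) Z x) := by
  rw [C.fderiv_oneFormSec hZ, C.fderiv_oneFormSec hZ, Rlow,
    ← C.covVF_const_sub_covVF_const hZ.contDiffAt, map_sub, sub_apply]
  linarith [Ω.skew x (covVF C (fun _ => u) Z x) (covVF C (fun _ => v) Z x),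
    Ω.skew x (Z x) (covVF C (fun _ => u) (covVF C (fun _ => v) Z) x),
    Ω.skew x (Z x) (covVF C (fun _ => v) (covVF C (fun _ => u) Z) x)]

end SympConnection

theorem statement_16_general {E : Type*} [NormedAddCommGroup E] [NormedSpace ℝ E]
    (Ω : SympForm E) (C : SympConnection Ω)
    (Z : E → E) (hZ : ContDiff ℝ (⊤ : ℕ∞) Z)
    (x X Y : E) (hXY : Ω.ω x X Y ≠ 0) :
    scurv C x X Y (Z x) * Ω.ω x X Y
      = (fderiv ℝ (fun y => oneFormSec C Z y Y) x X
          - fderiv ℝ (fun y => oneFormSec C Z y X) x Y)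
        + 2 * Ω.ω x (fderiv ℝ Z x X + C.Γ x X (Z x)) (fderiv ℝ Z x Y + C.Γ x Y (Z x)) := by
  rw [scurv, div_mul_cancel₀ _ hXY,
    C.fderiv_oneFormSec_sub_fderiv_oneFormSec (hZ.of_le (WithTop.coe_le_coe.mpr le_top)) X Y]
  simp only [SympConnection.covVF_const_left]
  ring

/-- For a symplectic connection `C`, a smooth vector field `Z`, a point `x` and
a 2-dimensional symplectic subspace `L ⊆ T_xM` containing `Z_x` and spanned by `X, Y`:
`scurv_{x,L}(Z)·Ω(X,Y) = d((∇_Z Z)^♭ − L_Z(Z^♭))(X,Y) + 2Ω(∇_X Z, ∇_Y Z)`, the exterior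
derivative being evaluated on the constant extensions of `X` and `Y` (it is tensorial). -/
theorem statement_16 {E : Type*} [NormedAddCommGroup E] [NormedSpace ℝ E]
    [FiniteDimensional ℝ E]
    (Ω : SympForm E) (C : SympConnection Ω)
    (Z : E → E) (hZ : ContDiff ℝ (⊤ : ℕ∞) Z)
    (x X Y : E) (hXY : Ω.ω x X Y ≠ 0)
    (hZL : Z x ∈ Submodule.span ℝ ({X, Y} : Set E)) :
    scurv C x X Y (Z x) * Ω.ω x X Y
      = (fderiv ℝ (fun y => oneFormSec C Z y Y) x X
          - fderiv ℝ (fun y => oneFormSec C Z y X) x Y)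
        + 2 * Ω.ω x (fderiv ℝ Z x X + C.Γ x X (Z x)) (fderiv ℝ Z x Y + C.Γ x Y (Z x)) :=
  statement_16_general Ω C Z hZ x X Y hXY
end

section
/- Let ∇ be a symplectic connection on a symplectic manifold (M, Ω). If there is a symplectic vector field Z on M such that ∇_Z Z = 0, then for any p ∈ M with Z_p ≠ 0, the symplectic sectional curvature of any 2-dimensional symplectic subspace L ⊂ T_pM containing Z_p is not definite (indeed scurv_{p,L}(Z_p) = 0). -/
variable {E : Type*} [NormedAddCommGroup E] [NormedSpace ℝ E]

/-
Write `B(u, v) = Ω(∇_u Z, v)`. Since `Z` is symplectic and `∇` is torsion free with `∇Ω = 0`,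
`B` is symmetric, so `B(u, Z) = Ω(∇_Z Z, u) = 0` identically. Differentiating
`Ω(∇_v Z, Z) = 0` along `u` gives `Ω(∇_u ∇_v Z, Z) = -Ω(∇_v Z, ∇_u Z)`, hence
`Ω(R(X, Y)Z, Z) = 2 Ω(∇_X Z, ∇_Y Z)`. If `Z_x = aX + bY ≠ 0`, then
`a ∇_X Z + b ∇_Y Z = ∇_Z Z = 0`, so `∇_X Z` and `∇_Y Z` are proportional and `Ω` vanishes
on them.
-/

lemma ContinuousLinearMap.apply_eq_zero_of_smul_add_smul_eq_zero
    {F : Type*} [NormedAddCommGroup F] [NormedSpace ℝ F]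
    (B : F →L[ℝ] F →L[ℝ] ℝ) (hB : ∀ v, B v v = 0) {a b : ℝ} {p q : F}
    (hpq : a • p + b • q = 0) (hab : a ≠ 0 ∨ b ≠ 0) : B p q = 0 := by
  have hp : a • p = -(b • q) := eq_neg_of_add_eq_zero_left hpq
  have hq : b • q = -(a • p) := eq_neg_of_add_eq_zero_right hpq
  rcases hab with ha | hb
  · have h := congrArg (fun w => B w q) hp
    simp only [map_smul, map_neg, smul_apply, neg_apply, hB, smul_eq_mul, mul_zero,
      neg_zero] at h
    exact (mul_eq_zero.mp h).resolve_left ha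
  · have h := congrArg (fun w => B p w) hq
    simp only [map_smul, map_neg, hB, smul_eq_mul, mul_zero, neg_zero] at h
    exact (mul_eq_zero.mp h).resolve_left hb

lemma SympForm.ω_self (Ω : SympForm E) (x v : E) : Ω.ω x v v = 0 := by
  linarith [Ω.skew x v v]

/-- `(L_Z Ω)(u, v) = 0` for all constant vector fields `u`, `v`. -/
def IsSymplecticVF (Ω : SympForm E) (Z : E → E) : Prop :=
  ∀ x u v, fderiv ℝ (fun y => Ω.ω y u v) x (Z x)
    + Ω.ω x (fderiv ℝ Z x u) v + Ω.ω x u (fderiv ℝ Z x v) = 0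

section SympConnection

variable {Ω : SympForm E} (C : SympConnection Ω)

lemma covVF_const_smul_add_smul (Z : E → E) (y : E) (a b : ℝ) (u v : E) :
    covVF C (fun _ => a • u + b • v) Z y
      = a • covVF C (fun _ => u) Z y + b • covVF C (fun _ => v) Z y := by
  simp only [covVF, map_add, map_smul, add_apply, smul_apply]
  module

lemma SympConnection.fderiv_ω_leibniz {V W : E → E} {x : E}
    (hV : DifferentiableAt ℝ V x) (hW : DifferentiableAt ℝ W x) (w : E) :
    fderiv ℝ (fun y => Ω.ω y (V y) (W y)) x w
      = Ω.ω x (covVF C (fun _ => w) V x) (W x) + Ω.ω x (V x) (covVF C (fun _ => w) W x) := by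
  have hω : HasFDerivAt Ω.ω (fderiv ℝ Ω.ω x) x :=
    (Ω.smooth.differentiable (by simp) x).hasFDerivAt
  rw [((hω.clm_apply hV.hasFDerivAt).clm_apply hW.hasFDerivAt).fderiv]
  simp only [covVF, add_apply, ContinuousLinearMap.comp_apply,
    ContinuousLinearMap.flip_apply, C.parallel, map_add]
  ring

lemma IsSymplecticVF.ω_covVF_comm {Z : E → E} (hZ : IsSymplecticVF Ω Z) (y u v : E) :
    Ω.ω y (covVF C (fun _ => u) Z y) v = Ω.ω y (covVF C (fun _ => v) Z y) u := by
  have h := hZ y u v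
  rw [C.fderiv_ω_leibniz (differentiableAt_const u) (differentiableAt_const v)] at h
  have hskew := Ω.skew y u (covVF C (fun _ => v) Z y)
  simp only [covVF, fderiv_const_apply, zero_apply, zero_add,
    C.symm y (Z y), map_add, add_apply] at h hskew ⊢
  linarith

lemma IsSymplecticVF.ω_covVF_self {Z : E → E} (hZ : IsSymplecticVF Ω Z)
    (hgeo : ∀ y, covVF C Z Z y = 0) (y u : E) :
    Ω.ω y (covVF C (fun _ => u) Z y) (Z y) = 0 := by
  rw [hZ.ω_covVF_comm C]
  show Ω.ω y (covVF C Z Z y) u = 0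
  rw [hgeo y, map_zero, zero_apply]

lemma hasFDerivAt_covVF_const {Z : E → E} (hZ : ContDiff ℝ 2 Z) (x v : E) :
    HasFDerivAt (covVF C (fun _ => v) Z)
      ((fderiv ℝ (fderiv ℝ Z) x).flip v + ((fderiv ℝ C.Γ x).flip v).flip (Z x)
        + (C.Γ x v).comp (fderiv ℝ Z x)) x := by
  have hZ' : HasFDerivAt Z (fderiv ℝ Z x) x := (hZ.differentiable (by simp) x).hasFDerivAt
  have hDZ : HasFDerivAt (fderiv ℝ Z) (fderiv ℝ (fderiv ℝ Z) x) x :=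
    ((hZ.fderiv_right (m := 1) (by norm_num)).differentiable (by simp) x).hasFDerivAt
  have hΓ : HasFDerivAt C.Γ (fderiv ℝ C.Γ x) x :=
    (C.smooth.differentiable (by simp) x).hasFDerivAt
  refine ((hDZ.clm_apply (hasFDerivAt_const v x)).add
    ((hΓ.clm_apply (hasFDerivAt_const v x)).clm_apply hZ')).congr_fderiv ?_
  ext w
  simp only [ContinuousLinearMap.comp_zero, zero_add, add_apply, ContinuousLinearMap.flip_apply,
    ContinuousLinearMap.comp_apply]
  abel

lemma curvOp_apply_eq_covVF_sub {Z : E → E} (hZ : ContDiff ℝ 2 Z) (x u v : E) :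
    curvOp C x u v (Z x)
      = covVF C (fun _ => u) (covVF C (fun _ => v) Z) x
        - covVF C (fun _ => v) (covVF C (fun _ => u) Z) x := by
  have hsymm : fderiv ℝ (fderiv ℝ Z) x u v = fderiv ℝ (fderiv ℝ Z) x v u :=
    (hZ.contDiffAt.isSymmSndFDerivAt (by simp)) u v
  simp only [covVF, (hasFDerivAt_covVF_const C hZ x _).fderiv, curvOp]
  simp only [add_apply, sub_apply, ContinuousLinearMap.comp_apply,
    ContinuousLinearMap.flip_apply, map_add, hsymm]
  abel

lemma rlow_self_eq_two_mul_ω_covVF {Z : E → E} (hZ : ContDiff ℝ 2 Z)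
    (hsymp : IsSymplecticVF Ω Z) (hgeo : ∀ y, covVF C Z Z y = 0) (x u v : E) :
    Rlow C x u v (Z x) (Z x)
      = 2 * Ω.ω x (covVF C (fun _ => u) Z x) (covVF C (fun _ => v) Z x) := by
  have hderiv : ∀ u w, Ω.ω x (covVF C (fun _ => w) (covVF C (fun _ => u) Z) x) (Z x)
      + Ω.ω x (covVF C (fun _ => u) Z x) (covVF C (fun _ => w) Z x) = 0 := by
    intro u w
    have hzero : (fun y => Ω.ω y (covVF C (fun _ => u) Z y) (Z y)) = fun _ => 0 :=
      funext (hsymp.ω_covVF_self C hgeo · u)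
    rw [← C.fderiv_ω_leibniz (hasFDerivAt_covVF_const C hZ x u).differentiableAt
      (hZ.differentiable (by simp) x), hzero, fderiv_const_apply, zero_apply]
  rw [Rlow, curvOp_apply_eq_covVF_sub C hZ, map_sub, sub_apply]
  linarith [hderiv u v, hderiv v u, Ω.skew x (covVF C (fun _ => v) Z x) (covVF C (fun _ => u) Z x)]

end SympConnection

theorem statement_17_general {E : Type*} [NormedAddCommGroup E] [NormedSpace ℝ E]
    (Ω : SympForm E) (C : SympConnection Ω)
    (Z : E → E) (hZ : ContDiff ℝ (⊤ : ℕ∞) Z)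
    (hsympZ : ∀ x u v,
      fderiv ℝ (fun y => Ω.ω y u v) x (Z x)
        + Ω.ω x (fderiv ℝ Z x u) v + Ω.ω x u (fderiv ℝ Z x v) = 0)
    (hgeo : ∀ x, fderiv ℝ Z x (Z x) + C.Γ x (Z x) (Z x) = 0)
    (x : E) (hZx : Z x ≠ 0)
    (X Y : E)
    (hZL : Z x ∈ Submodule.span ℝ ({X, Y} : Set E)) :
    scurv C x X Y (Z x) = 0
    ∧ ¬ ((∀ W ∈ Submodule.span ℝ ({X, Y} : Set E), W ≠ 0 → 0 < scurv C x X Y W)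
        ∨ (∀ W ∈ Submodule.span ℝ ({X, Y} : Set E), W ≠ 0 → scurv C x X Y W < 0)) := by
  have hsymp : IsSymplecticVF Ω Z := hsympZ
  have hZ2 : ContDiff ℝ 2 Z := hZ.of_le (by norm_cast)
  obtain ⟨a, b, hab⟩ := Submodule.mem_span_pair.mp hZL
  have hdep : a • covVF C (fun _ => X) Z x + b • covVF C (fun _ => Y) Z x = 0 := by
    rw [← covVF_const_smul_add_smul, hab]
    exact hgeo x
  have hab0 : a ≠ 0 ∨ b ≠ 0 := by
    by_contra! h
    apply hZx
    rw [← hab, h.1, h.2, zero_smul, zero_smul, add_zero]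
  have hscurv : scurv C x X Y (Z x) = 0 := by
    rw [scurv, rlow_self_eq_two_mul_ω_covVF C hZ2 hsymp hgeo,
      (Ω.ω x).apply_eq_zero_of_smul_add_smul_eq_zero (Ω.ω_self x) hdep hab0, mul_zero, zero_div]
  refine ⟨hscurv, ?_⟩
  rintro (hpos | hneg)
  · exact (hpos (Z x) hZL hZx).ne' hscurv
  · exact (hneg (Z x) hZL hZx).ne hscurv

/-- If `Z` is a symplectic vector field (`L_Z Ω = 0`, expressed on constant
vector fields) with `∇_Z Z = 0`, then at any point `x` with `Z_x ≠ 0` the symplectic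
sectional curvature of any 2-dimensional symplectic subspace `L` containing `Z_x` (spanned by
`X, Y`) is not definite; indeed `scurv_{x,L}(Z_x) = 0`. -/
theorem statement_17 {E : Type*} [NormedAddCommGroup E] [NormedSpace ℝ E]
    [FiniteDimensional ℝ E]
    (Ω : SympForm E) (C : SympConnection Ω)
    (Z : E → E) (hZ : ContDiff ℝ (⊤ : ℕ∞) Z)
    (hsympZ : ∀ x u v,
      fderiv ℝ (fun y => Ω.ω y u v) x (Z x)
        + Ω.ω x (fderiv ℝ Z x u) v + Ω.ω x u (fderiv ℝ Z x v) = 0)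
    (hgeo : ∀ x, fderiv ℝ Z x (Z x) + C.Γ x (Z x) (Z x) = 0)
    (x : E) (hZx : Z x ≠ 0)
    (X Y : E) (hXY : Ω.ω x X Y ≠ 0)
    (hZL : Z x ∈ Submodule.span ℝ ({X, Y} : Set E)) :
    scurv C x X Y (Z x) = 0
    ∧ ¬ ((∀ W ∈ Submodule.span ℝ ({X, Y} : Set E), W ≠ 0 → 0 < scurv C x X Y W)
        ∨ (∀ W ∈ Submodule.span ℝ ({X, Y} : Set E), W ≠ 0 → scurv C x X Y W < 0)) :=
  statement_17_general Ω C Z hZ hsympZ hgeo x hZx X Y hZL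
end

section
/- Let (G, Ω) be a connected symplectic Lie group with Lie algebra 𝔤 that is not unimodular, and let ℓ ∈ 𝔤 be the element defined by Ω(ℓ, x) = tr ad(x) for all x ∈ 𝔤 (so ℓ ≠ 0). Then ℓ is self-adjoint (ad(ℓ)^* = ad(ℓ)), and for the canonical symplectic connection of (G, Ω) the symplectic sectional curvature of any 2-dimensional symplectic subspace of 𝔤 containing ℓ is not definite. -/
/-!
Since `tr ad` vanishes on brackets, `Ω(ℓ, [a, b]) = 0` for all `a, b`; with this, the closedness
of `Ω` is exactly the self-adjointness of `ad ℓ`. The same vanishing collapses the curvature term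
to `Ω(R(X, Y)ℓ, ℓ) = (2/9) Ω([X, ℓ], [Y, ℓ])`. If `ℓ ∈ span {X, Y}`, both brackets are multiples
of `[X, Y]`, so this is zero: the symplectic sectional curvature of the plane vanishes at the
nonzero vector `ℓ`, hence is not definite.
-/

/-- The curvature `R(x,y)z = ∇_x∇_y z − ∇_y∇_x z − ∇_{[x,y]}z` of a left-invariant
connection on a Lie group, evaluated on left-invariant vector fields; the connection is
recorded by the tensor `sad : 𝔤 → End(𝔤)` with `∇_{ℓ^a}ℓ^b = ℓ^{sad(a)b}`. -/
def curvLie {L : Type*} [LieRing L] [LieAlgebra ℝ L]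
    (sad : L → L →ₗ[ℝ] L) (x y z : L) : L :=
  sad x (sad y z) - sad y (sad x z) - sad ⁅x, y⁆ z

section SymplecticLieAlgebra

variable {L : Type*} [LieRing L] [LieAlgebra ℝ L] {Ω : L →ₗ[ℝ] L →ₗ[ℝ] ℝ} {ℓ : L}

lemma self_adjoint_of_forall_apply_lie_eq_zero (hskew : ∀ u v, Ω u v = - Ω v u)
    (hclosed : ∀ x y z, Ω ⁅x, y⁆ z + Ω ⁅y, z⁆ x + Ω ⁅z, x⁆ y = 0)
    (hℓ : ∀ a b : L, Ω ℓ ⁅a, b⁆ = 0) (b c : L) :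
    Ω ⁅ℓ, b⁆ c = - Ω b ⁅ℓ, c⁆ := by
  have hbc : Ω ⁅b, c⁆ ℓ = 0 := by rw [hskew, hℓ, neg_zero]
  have hcℓ : Ω ⁅c, ℓ⁆ b = Ω b ⁅ℓ, c⁆ := by
    rw [← lie_skew ℓ c, map_neg, hskew b, neg_neg]
  linarith [hclosed ℓ b c]

lemma apply_lie_lie_eq_zero_of_mem_span_pair (hskew : ∀ u v, Ω u v = - Ω v u) {X Y : L}
    (hmem : ℓ ∈ Submodule.span ℝ ({X, Y} : Set L)) :
    Ω ⁅X, ℓ⁆ ⁅Y, ℓ⁆ = 0 := by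
  obtain ⟨a, b, rfl⟩ := Submodule.mem_span_pair.mp hmem
  have hself (u : L) : Ω u u = 0 := by linarith [hskew u u]
  have hYX : ⁅Y, X⁆ = -⁅X, Y⁆ := (lie_skew Y X).symm
  simp only [lie_add, lie_smul, lie_self, smul_zero, zero_add, add_zero, hYX, map_smul, map_neg,
    LinearMap.smul_apply, hself, neg_zero]

variable {sad : L → L →ₗ[ℝ] L}
  (hsad : ∀ a b c, Ω (sad a b) c = (1 / 3) * (Ω ⁅a, b⁆ c - Ω b ⁅a, c⁆))
include hsad

lemma apply_sad_apply_left_eq (hskew : ∀ u v, Ω u v = - Ω v u)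
    (hℓ : ∀ a b : L, Ω ℓ ⁅a, b⁆ = 0) (u v : L) :
    Ω (sad u v) ℓ = -(1 / 3) * Ω v ⁅u, ℓ⁆ := by
  rw [hsad, hskew ⁅u, v⁆, hℓ]
  ring

lemma apply_sad_apply_right_eq (hℓ : ∀ a b : L, Ω ℓ ⁅a, b⁆ = 0) (u c : L) :
    Ω (sad u ℓ) c = (1 / 3) * Ω ⁅u, ℓ⁆ c := by
  rw [hsad, hℓ]
  ring

lemma apply_curvLie_self_eq (hskew : ∀ u v, Ω u v = - Ω v u)
    (hℓ : ∀ a b : L, Ω ℓ ⁅a, b⁆ = 0) (X Y : L) :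
    Ω (curvLie sad X Y ℓ) ℓ = (2 / 9) * Ω ⁅X, ℓ⁆ ⁅Y, ℓ⁆ := by
  simp only [curvLie, map_sub, LinearMap.sub_apply,
    apply_sad_apply_left_eq hsad hskew hℓ, apply_sad_apply_right_eq hsad hℓ, hℓ]
  linarith [hskew ⁅Y, ℓ⁆ ⁅X, ℓ⁆]

end SymplecticLieAlgebra

theorem statement_19_general {L : Type*} [LieRing L] [LieAlgebra ℝ L]
    (Ω : L →ₗ[ℝ] L →ₗ[ℝ] ℝ)
    (hskew : ∀ u v, Ω u v = - Ω v u)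
    (hclosed : ∀ x y z, Ω ⁅x, y⁆ z + Ω ⁅y, z⁆ x + Ω ⁅z, x⁆ y = 0)
    (hnotunimod : ∃ x : L, LinearMap.trace ℝ L (LieAlgebra.ad ℝ L x) ≠ 0)
    (ℓ : L) (hℓ : ∀ x : L, Ω ℓ x = LinearMap.trace ℝ L (LieAlgebra.ad ℝ L x))
    (sad : L → L →ₗ[ℝ] L)
    (hsad : ∀ a b c, Ω (sad a b) c = (1 / 3) * (Ω ⁅a, b⁆ c - Ω b ⁅a, c⁆)) :
    ℓ ≠ 0
    ∧ (∀ b c, Ω ⁅ℓ, b⁆ c = - Ω b ⁅ℓ, c⁆)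
    ∧ ∀ X Y : L, Ω X Y ≠ 0 → ℓ ∈ Submodule.span ℝ ({X, Y} : Set L) →
        ¬ ((∀ Z ∈ Submodule.span ℝ ({X, Y} : Set L), Z ≠ 0 →
              0 < Ω (curvLie sad X Y Z) Z / Ω X Y)
          ∨ (∀ Z ∈ Submodule.span ℝ ({X, Y} : Set L), Z ≠ 0 →
              Ω (curvLie sad X Y Z) Z / Ω X Y < 0)) := by
  have hℓ_lie (a b : L) : Ω ℓ ⁅a, b⁆ = 0 := by simp [hℓ]
  have hℓ_ne : ℓ ≠ 0 := by
    rintro rfl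
    obtain ⟨x, hx⟩ := hnotunimod
    exact hx (by rw [← hℓ, map_zero, LinearMap.zero_apply])
  refine ⟨hℓ_ne, self_adjoint_of_forall_apply_lie_eq_zero hskew hclosed hℓ_lie, ?_⟩
  intro X Y _ hmem
  have hcurv : Ω (curvLie sad X Y ℓ) ℓ / Ω X Y = 0 := by
    rw [apply_curvLie_self_eq hsad hskew hℓ_lie,
      apply_lie_lie_eq_zero_of_mem_span_pair hskew hmem, mul_zero, zero_div]
  rintro (hpos | hneg)
  · exact (hpos ℓ hmem hℓ_ne).ne' hcurv
  · exact (hneg ℓ hmem hℓ_ne).ne hcurv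

/-- Let `(G, Ω)` be a connected symplectic Lie group, with Lie algebra `𝔤`
(modeled here by the Lie algebra `𝔤` with the induced nondegenerate closed 2-form `Ω`),
that is not unimodular, and let `ℓ ∈ 𝔤` be defined by `Ω(ℓ, x) = tr ad(x)` for all `x`
(so `ℓ ≠ 0`).  Then `ℓ` is self-adjoint (`ad(ℓ)^* = ad(ℓ)`, i.e.
`Ω([ℓ,b],c) = -Ω(b,[ℓ,c])`), and for the canonical symplectic connection, determined by
`Ω(sad(a)b, c) = (1/3)(Ω([a,b],c) − Ω(b,[a,c]))`, the symplectic sectional curvature of any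
2-dimensional symplectic subspace of `𝔤` containing `ℓ` is not definite. -/
theorem statement_19 {L : Type*} [LieRing L] [LieAlgebra ℝ L] [Module.Finite ℝ L]
    (Ω : L →ₗ[ℝ] L →ₗ[ℝ] ℝ)
    (hskew : ∀ u v, Ω u v = - Ω v u)
    (hnondeg : ∀ u, (∀ v, Ω u v = 0) → u = 0)
    (hclosed : ∀ x y z, Ω ⁅x, y⁆ z + Ω ⁅y, z⁆ x + Ω ⁅z, x⁆ y = 0)
    (hnotunimod : ∃ x : L, LinearMap.trace ℝ L (LieAlgebra.ad ℝ L x) ≠ 0)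
    (ℓ : L) (hℓ : ∀ x : L, Ω ℓ x = LinearMap.trace ℝ L (LieAlgebra.ad ℝ L x))
    (sad : L → L →ₗ[ℝ] L)
    (hsad : ∀ a b c, Ω (sad a b) c = (1 / 3) * (Ω ⁅a, b⁆ c - Ω b ⁅a, c⁆)) :
    ℓ ≠ 0
    ∧ (∀ b c, Ω ⁅ℓ, b⁆ c = - Ω b ⁅ℓ, c⁆)
    ∧ ∀ X Y : L, Ω X Y ≠ 0 → ℓ ∈ Submodule.span ℝ ({X, Y} : Set L) →
        ¬ ((∀ Z ∈ Submodule.span ℝ ({X, Y} : Set L), Z ≠ 0 →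
              0 < Ω (curvLie sad X Y Z) Z / Ω X Y)
          ∨ (∀ Z ∈ Submodule.span ℝ ({X, Y} : Set L), Z ≠ 0 →
              Ω (curvLie sad X Y Z) Z / Ω X Y < 0)) :=
  statement_19_general Ω hskew hclosed hnotunimod ℓ hℓ sad hsad
end
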